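/- Let (Ω, 𝔄, P) be a probability space, θ a real-valued random variable with symmetric law (law of −θ equals law of θ) and finite moments of all orders, ε independent of θ with finite moments of all orders, and z = θ² + ε. Fix n ∈ ℕ and assume the Hankel moment matrix M_{ℓk} = E[z^{ℓ+k}] (0 ≤ ℓ, k ≤ n) is invertible. Then the unique coefficient vector (a₀, …, aₙ) minimizing E[(θ − Σ_{k=0}^{n} a_k z^k)²] is the zero vector; i.e., the best polynomial predictor of θ from z of any degree n is identically zero. -/

import Mathlib

/-
Since the measurement `z = θ² + ε` forgets the sign of `θ`, independence and the symmetry of `θ`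
make every mixed moment `E[θ zᵖ]` a combination of odd moments of `θ`, hence zero. The risk of
the coefficient vector `b` is therefore `E[θ²] + bᵀ M b`, and `M`, a Gram matrix of the powers
of `z`, is positive semidefinite; being invertible it is positive definite, so `b = 0` is the
unique minimizer.
-/

open MeasureTheory ProbabilityTheory Finset Matrix

theorem integral_comp_eq_zero_of_map_neg_eq {Ω : Type*} [MeasurableSpace Ω] {μ : Measure Ω}
    {X : Ω → ℝ} (hX : AEMeasurable X μ) (hsym : μ.map (fun ω => -X ω) = μ.map X) {f : ℝ → ℝ}
    (hf : AEStronglyMeasurable f (μ.map X)) (hodd : f.Odd) : ∫ ω, f (X ω) ∂μ = 0 := by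
  have h : ∫ x, f x ∂(μ.map fun ω => -X ω) = ∫ ω, f (-X ω) ∂μ :=
    integral_map hX.neg (hsym ▸ hf)
  rw [hsym, integral_map hX hf] at h
  simp only [hodd.eq, integral_neg] at h
  linarith

theorem pow_mul_sq_add_pow {R : Type*} [CommSemiring R] (x y : R) (i p : ℕ) :
    x ^ i * (x ^ 2 + y) ^ p
      = ∑ j ∈ range (p + 1), x ^ (2 * j + i) * y ^ (p - j) * p.choose j := by
  rw [add_pow, mul_sum]
  exact sum_congr rfl fun j _ => by ring

namespace ProbabilityTheory.IndepFun

variable {Ω : Type*} [MeasurableSpace Ω] {μ : Measure Ω} {X Y : Ω → ℝ}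

theorem integrable_pow_mul_pow (hXY : IndepFun X Y μ)
    (hX : ∀ p : ℕ, Integrable (fun ω => X ω ^ p) μ)
    (hY : ∀ p : ℕ, Integrable (fun ω => Y ω ^ p) μ) (i j : ℕ) :
    Integrable (fun ω => X ω ^ i * Y ω ^ j) μ :=
  (hXY.comp (measurable_id.pow_const i) (measurable_id.pow_const j)).integrable_mul (hX i) (hY j)

theorem integral_pow_mul_pow (hXY : IndepFun X Y μ)
    (hX : ∀ p : ℕ, Integrable (fun ω => X ω ^ p) μ)
    (hY : ∀ p : ℕ, Integrable (fun ω => Y ω ^ p) μ) (i j : ℕ) :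
    ∫ ω, X ω ^ i * Y ω ^ j ∂μ = (∫ ω, X ω ^ i ∂μ) * ∫ ω, Y ω ^ j ∂μ :=
  (hXY.comp (measurable_id.pow_const i) (measurable_id.pow_const j)
    ).integral_fun_mul_eq_mul_integral (hX i).aestronglyMeasurable (hY j).aestronglyMeasurable

theorem integrable_pow_mul_sq_add_pow (hXY : IndepFun X Y μ)
    (hX : ∀ p : ℕ, Integrable (fun ω => X ω ^ p) μ)
    (hY : ∀ p : ℕ, Integrable (fun ω => Y ω ^ p) μ) (i p : ℕ) :
    Integrable (fun ω => X ω ^ i * (X ω ^ 2 + Y ω) ^ p) μ := by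
  simp only [pow_mul_sq_add_pow]
  exact integrable_finsetSum _ fun j _ =>
    (hXY.integrable_pow_mul_pow hX hY _ _).mul_const _

theorem integral_mul_sq_add_pow_eq_zero (hXY : IndepFun X Y μ)
    (hX : ∀ p : ℕ, Integrable (fun ω => X ω ^ p) μ)
    (hY : ∀ p : ℕ, Integrable (fun ω => Y ω ^ p) μ)
    (hsym : μ.map (fun ω => -X ω) = μ.map X) (p : ℕ) :
    ∫ ω, X ω * (X ω ^ 2 + Y ω) ^ p ∂μ = 0 := by
  have hXm : AEMeasurable X μ := by simpa using (hX 1).aemeasurable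
  have hodd (j : ℕ) : ∫ ω, X ω ^ (2 * j + 1) ∂μ = 0 :=
    integral_comp_eq_zero_of_map_neg_eq hXm hsym
      (measurable_id.pow_const _).aestronglyMeasurable
      fun x => (odd_two_mul_add_one j).neg_pow x
  have hexpand (ω : Ω) : X ω * (X ω ^ 2 + Y ω) ^ p
      = ∑ j ∈ range (p + 1), X ω ^ (2 * j + 1) * Y ω ^ (p - j) * p.choose j := by
    simpa using pow_mul_sq_add_pow (X ω) (Y ω) 1 p
  simp only [hexpand]
  rw [integral_finsetSum _ fun j _ => (hXY.integrable_pow_mul_pow hX hY _ _).mul_const _]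
  refine sum_eq_zero fun j _ => ?_
  rw [integral_mul_const, hXY.integral_pow_mul_pow hX hY, hodd, zero_mul, zero_mul]

end ProbabilityTheory.IndepFun

section MomentMatrix

variable {Ω : Type*} [MeasurableSpace Ω] {μ : Measure Ω} {θ z : Ω → ℝ} {m : ℕ}

noncomputable def momentMatrix (z : Ω → ℝ) (μ : Measure Ω) (m : ℕ) : Matrix (Fin m) (Fin m) ℝ :=
  Matrix.of fun l k => ∫ ω, z ω ^ ((l : ℕ) + (k : ℕ)) ∂μ

theorem sum_mul_pow_sq {R : Type*} [CommSemiring R] (b : Fin m → R) (x : R) :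
    (∑ k, b k * x ^ (k : ℕ)) ^ 2
      = ∑ k : Fin m, b k * ∑ j : Fin m, x ^ ((k : ℕ) + (j : ℕ)) * b j := by
  rw [sq, sum_mul_sum]
  exact sum_congr rfl fun k _ => by rw [mul_sum]; exact sum_congr rfl fun j _ => by ring

theorem integrable_sum_mul_pow_sq (hz : ∀ p : ℕ, Integrable (fun ω => z ω ^ p) μ)
    (b : Fin m → ℝ) : Integrable (fun ω => (∑ k, b k * z ω ^ (k : ℕ)) ^ 2) μ := by
  simp only [sum_mul_pow_sq]
  exact integrable_finsetSum _ fun k _ =>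
    (integrable_finsetSum _ fun j _ => (hz _).mul_const _).const_mul _

theorem integral_sum_mul_pow_sq (hz : ∀ p : ℕ, Integrable (fun ω => z ω ^ p) μ)
    (b : Fin m → ℝ) :
    ∫ ω, (∑ k, b k * z ω ^ (k : ℕ)) ^ 2 ∂μ = b ⬝ᵥ (momentMatrix z μ m *ᵥ b) := by
  simp only [sum_mul_pow_sq]
  rw [integral_finsetSum _ fun k _ =>
    (integrable_finsetSum _ fun j _ => (hz _).mul_const _).const_mul _]
  refine sum_congr rfl fun k _ => ?_
  rw [integral_const_mul, integral_finsetSum _ fun j _ => (hz _).mul_const _]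
  simp only [integral_mul_const, mulVec, dotProduct, momentMatrix, of_apply]

theorem momentMatrix_posSemidef (hz : ∀ p : ℕ, Integrable (fun ω => z ω ^ p) μ) :
    (momentMatrix z μ m).PosSemidef :=
  .of_dotProduct_mulVec_nonneg (IsHermitian.ext fun l k => by simp [momentMatrix, add_comm])
    fun b => by
      rw [star_trivial, ← integral_sum_mul_pow_sq hz]
      exact integral_nonneg fun _ => sq_nonneg _

theorem integral_sub_sum_mul_pow_sq (hθ : Integrable (fun ω => θ ω ^ 2) μ)
    (hz : ∀ p : ℕ, Integrable (fun ω => z ω ^ p) μ)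
    (hθz : ∀ p : ℕ, Integrable (fun ω => θ ω * z ω ^ p) μ)
    (horth : ∀ p : ℕ, ∫ ω, θ ω * z ω ^ p ∂μ = 0) (b : Fin m → ℝ) :
    ∫ ω, (θ ω - ∑ k, b k * z ω ^ (k : ℕ)) ^ 2 ∂μ
      = ∫ ω, θ ω ^ 2 ∂μ + b ⬝ᵥ (momentMatrix z μ m *ᵥ b) := by
  have hcross : Integrable (fun ω => ∑ k, b k * (θ ω * z ω ^ (k : ℕ))) μ :=
    integrable_finsetSum _ fun k _ => (hθz _).const_mul _
  have hexpand (ω : Ω) : (θ ω - ∑ k, b k * z ω ^ (k : ℕ)) ^ 2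
      = θ ω ^ 2 - 2 * ∑ k, b k * (θ ω * z ω ^ (k : ℕ)) + (∑ k, b k * z ω ^ (k : ℕ)) ^ 2 := by
    simp only [mul_left_comm (b _), ← mul_sum]
    ring
  have hdiff : Integrable (fun ω => θ ω ^ 2 - 2 * ∑ k, b k * (θ ω * z ω ^ (k : ℕ))) μ :=
    hθ.sub (hcross.const_mul 2)
  simp only [hexpand]
  rw [integral_add hdiff (integrable_sum_mul_pow_sq hz b),
    integral_sub hθ (hcross.const_mul 2), integral_const_mul,
    integral_finsetSum _ fun k _ => (hθz _).const_mul _, integral_sum_mul_pow_sq hz]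
  simp [integral_const_mul, horth]

end MomentMatrix

theorem stmt12_general {Ω : Type*} [MeasurableSpace Ω] (μ : Measure Ω)
    (θ ε : Ω → ℝ)
    (hsym : Measure.map (fun ω => -θ ω) μ = Measure.map θ μ)
    (hθmom : ∀ p : ℕ, Integrable (fun ω => θ ω ^ p) μ)
    (hεmom : ∀ p : ℕ, Integrable (fun ω => ε ω ^ p) μ)
    (hindep : IndepFun θ ε μ)
    (n : ℕ) (M : Matrix (Fin (n + 1)) (Fin (n + 1)) ℝ)
    (hM : ∀ l k : Fin (n + 1), M l k = ∫ ω, (θ ω ^ 2 + ε ω) ^ ((l : ℕ) + (k : ℕ)) ∂μ)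
    (hMinv : IsUnit M.det) :
    (∀ b : Fin (n + 1) → ℝ,
        ∫ ω, (θ ω - ∑ k : Fin (n + 1), (0 : ℝ) * (θ ω ^ 2 + ε ω) ^ (k : ℕ)) ^ 2 ∂μ ≤
          ∫ ω, (θ ω - ∑ k : Fin (n + 1), b k * (θ ω ^ 2 + ε ω) ^ (k : ℕ)) ^ 2 ∂μ) ∧
      ∀ a : Fin (n + 1) → ℝ,
        (∀ b : Fin (n + 1) → ℝ,
            ∫ ω, (θ ω - ∑ k : Fin (n + 1), a k * (θ ω ^ 2 + ε ω) ^ (k : ℕ)) ^ 2 ∂μ ≤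
              ∫ ω, (θ ω - ∑ k : Fin (n + 1), b k * (θ ω ^ 2 + ε ω) ^ (k : ℕ)) ^ 2 ∂μ) →
          a = 0 := by
  have hz (p : ℕ) : Integrable (fun ω => (θ ω ^ 2 + ε ω) ^ p) μ := by
    simpa using hindep.integrable_pow_mul_sq_add_pow hθmom hεmom 0 p
  have hθz (p : ℕ) : Integrable (fun ω => θ ω * (θ ω ^ 2 + ε ω) ^ p) μ := by
    simpa using hindep.integrable_pow_mul_sq_add_pow hθmom hεmom 1 p
  have hMeq : M = momentMatrix (fun ω => θ ω ^ 2 + ε ω) μ (n + 1) := Matrix.ext hM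
  have hrisk := integral_sub_sum_mul_pow_sq (m := n + 1) (hθmom 2) hz hθz
    (hindep.integral_mul_sq_add_pow_eq_zero hθmom hεmom hsym)
  rw [← hMeq] at hrisk
  have hPD : M.PosDef := (hMeq ▸ momentMatrix_posSemidef hz).posDef_iff_isUnit.mpr
    ((isUnit_iff_isUnit_det M).mpr hMinv)
  refine ⟨fun b => ?_, fun a ha => ?_⟩
  · simpa [hrisk] using hPD.posSemidef.dotProduct_mulVec_nonneg b
  · by_contra ha0
    have hpos := hPD.dotProduct_mulVec_pos ha0
    have hle := (hrisk a).symm.trans_le ((ha 0).trans_eq (hrisk 0))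
    rw [star_trivial] at hpos
    simp only [mulVec_zero, dotProduct_zero] at hle
    linarith

/-- For the measurement `z = θ² + ε` (with `θ` symmetrically distributed with all moments,
`ε` independent of `θ` with all moments), if the Hankel moment matrix
`M_{ℓk} = E[z^{ℓ+k}]`, `0 ≤ ℓ, k ≤ n`, is invertible, then the unique coefficient vector
minimizing `E[(θ - Σₖ aₖ zᵏ)²]` is zero: the best polynomial predictor of `θ` from `z`
of any degree `n` is identically zero. -/
theorem stmt12 {Ω : Type*} [MeasurableSpace Ω] (μ : Measure Ω) [IsProbabilityMeasure μ]
    (θ ε : Ω → ℝ) (hθmeas : Measurable θ) (hεmeas : Measurable ε)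
    (hsym : Measure.map (fun ω => -θ ω) μ = Measure.map θ μ)
    (hθmom : ∀ p : ℕ, Integrable (fun ω => θ ω ^ p) μ)
    (hεmom : ∀ p : ℕ, Integrable (fun ω => ε ω ^ p) μ)
    (hindep : IndepFun θ ε μ)
    (n : ℕ) (M : Matrix (Fin (n + 1)) (Fin (n + 1)) ℝ)
    (hM : ∀ l k : Fin (n + 1), M l k = ∫ ω, (θ ω ^ 2 + ε ω) ^ ((l : ℕ) + (k : ℕ)) ∂μ)
    (hMinv : IsUnit M.det) :
    (∀ b : Fin (n + 1) → ℝ,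
        ∫ ω, (θ ω - ∑ k : Fin (n + 1), (0 : ℝ) * (θ ω ^ 2 + ε ω) ^ (k : ℕ)) ^ 2 ∂μ ≤
          ∫ ω, (θ ω - ∑ k : Fin (n + 1), b k * (θ ω ^ 2 + ε ω) ^ (k : ℕ)) ^ 2 ∂μ) ∧
      ∀ a : Fin (n + 1) → ℝ,
        (∀ b : Fin (n + 1) → ℝ,
            ∫ ω, (θ ω - ∑ k : Fin (n + 1), a k * (θ ω ^ 2 + ε ω) ^ (k : ℕ)) ^ 2 ∂μ ≤
              ∫ ω, (θ ω - ∑ k : Fin (n + 1), b k * (θ ω ^ 2 + ε ω) ^ (k : ℕ)) ^ 2 ∂μ) →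
          a = 0 :=
  stmt12_general μ θ ε hsym hθmom hεmom hindep n M hM hMinv
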